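/- Let A = (a_n(i)) be a G∞-matrix satisfying (L): there exists n₀ with sup_{i≥2} (log i)·v_{n₀}(i) < ∞. Then for every n there exists m > n such that sup_{i≥2} v_m(i)·∑_{j=1}^{i−1} 1/(j·v_n(j)) < ∞. (This estimate shows that every boundary point λ ∉ {0,1} of the disc D(1) = {λ : |λ−1/2| < 1/2} lies in the resolvent set of the Cesàro operator 𝖢 on k₀(V), so that σ(𝖢;k₀(V)) = {0,1} ∪ D(1) in the non-nuclear case satisfying (L).) -/
import Mathlib


open Filter

/-- `a` is a G∞-matrix (indices range over positive integers). -/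
def IsGinfMatrix (a : ℕ → ℕ → ℝ) : Prop :=
  (∀ n i, 0 < n → 0 < i → a n i ≤ a (n + 1) i) ∧
  (∀ n i, 0 < n → 0 < i → 1 ≤ a n i ∧ a n i ≤ a n (i + 1)) ∧
  (∀ n, 0 < n → ∃ m, n < m ∧ ∃ M : ℝ, 0 < M ∧ ∀ i, 0 < i → (a n i) ^ 2 ≤ M * a m i)

lemma ginf_mono_n {a : ℕ → ℕ → ℝ} (hA : IsGinfMatrix a) {k l i : ℕ}
    (hk : 0 < k) (hi : 0 < i) (hkl : k ≤ l) : a k i ≤ a l i := by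
  induction l, hkl using Nat.le_induction with
  | base => exact le_rfl
  | succ l hl ih => exact ih.trans (hA.1 l i (hk.trans_le hl) hi)

lemma ginf_one_le {a : ℕ → ℕ → ℝ} (hA : IsGinfMatrix a) {n i : ℕ}
    (hn : 0 < n) (hi : 0 < i) : 1 ≤ a n i := (hA.2.1 n i hn hi).1

lemma ginf_mono_i {a : ℕ → ℕ → ℝ} (hA : IsGinfMatrix a) {n j i : ℕ}
    (hn : 0 < n) (hj : 0 < j) (hji : j ≤ i) : a n j ≤ a n i := by
  induction i, hji using Nat.le_induction with
  | base => exact le_rfl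
  | succ i hi ih => exact ih.trans (hA.2.1 n i hn (hj.trans_le hi)).2

/-- For a G∞-matrix satisfying (L) (`sup_{i≥2} (log i)·v_{n₀}(i) < ∞` for some `n₀`),
for every `n` there is `m > n` with
`sup_{i≥2} v_m(i)·∑_{j=1}^{i−1} 1/(j·v_n(j)) < ∞`, where `v n i = (a n i)⁻¹`
(so `1/(j·v_n(j)) = a n j / j`). -/
theorem stmt_17 (a : ℕ → ℕ → ℝ) (hA : IsGinfMatrix a)
    (hL : ∃ n₀, 0 < n₀ ∧ ∃ C : ℝ, ∀ i : ℕ, 2 ≤ i → Real.log i * (a n₀ i)⁻¹ ≤ C) :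
    ∀ n, 0 < n → ∃ m, n < m ∧ ∃ C : ℝ, ∀ i : ℕ, 2 ≤ i →
      (a m i)⁻¹ * ∑ j ∈ Finset.Icc 1 (i - 1), a n j / (j : ℝ) ≤ C := by
  intro n hn
  obtain ⟨n₀, hn₀, C, hC⟩ := hL
  set n₁ := max n n₀ with hn₁def
  have hn₁ : 0 < n₁ := hn.trans_le (le_max_left _ _)
  obtain ⟨m, hm, M, hM, hMi⟩ := hA.2.2 n₁ hn₁
  have hm0 : 0 < m := hn₁.trans hm
  have hC0 : 0 ≤ C := by
    have h2 := hC 2 le_rfl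
    have ha2 : (0:ℝ) < a n₀ 2 := lt_of_lt_of_le one_pos (ginf_one_le hA hn₀ (by norm_num))
    have : (0:ℝ) ≤ Real.log 2 * (a n₀ 2)⁻¹ := by
      apply mul_nonneg (Real.log_nonneg (by norm_num)) (by positivity)
    calc (0:ℝ) ≤ _ := this
      _ ≤ C := by simpa using h2
  refine ⟨m, lt_of_le_of_lt (le_max_left n n₀) hm, (1 + C) * M, ?_⟩
  intro i hi
  have hi1 : 1 ≤ i := le_trans (by norm_num) hi
  have hipos : (0:ℕ) < i := hi1
  have hai : (0:ℝ) < a m i := lt_of_lt_of_le one_pos (ginf_one_le hA hm0 hipos)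
  have hani : (0:ℝ) < a n₁ i := lt_of_lt_of_le one_pos (ginf_one_le hA hn₁ hipos)
  -- bound each term
  have hsum1 : ∑ j ∈ Finset.Icc 1 (i - 1), a n j / (j : ℝ)
      ≤ a n₁ i * ∑ j ∈ Finset.Icc 1 (i - 1), (j : ℝ)⁻¹ := by
    rw [Finset.mul_sum]
    apply Finset.sum_le_sum
    intro j hj
    obtain ⟨hj1, hj2⟩ := Finset.mem_Icc.mp hj
    have hjpos : (0:ℝ) < (j:ℝ) := by exact_mod_cast hj1
    have h1 : a n j ≤ a n₁ j := ginf_mono_n hA hn hj1 (le_max_left _ _)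
    have h2 : a n₁ j ≤ a n₁ i := ginf_mono_i hA hn₁ hj1 (hj2.trans (Nat.sub_le i 1))
    rw [div_eq_mul_inv]
    exact mul_le_mul_of_nonneg_right (h1.trans h2) (by positivity)
  have hharm : ∑ j ∈ Finset.Icc 1 (i - 1), (j : ℝ)⁻¹ ≤ 1 + Real.log i := by
    have h := harmonic_le_one_add_log (i - 1)
    have heq : ((harmonic (i-1) : ℚ) : ℝ) = ∑ j ∈ Finset.Icc 1 (i - 1), (j : ℝ)⁻¹ := by
      rw [harmonic_eq_sum_Icc]; push_cast; ring
    have hlog : Real.log (i - 1 : ℕ) ≤ Real.log i := by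
      gcongr
      · have : 0 < i - 1 := by omega
        exact_mod_cast this
      · exact_mod_cast Nat.sub_le i 1
    linarith [heq ▸ h]
  have hlogC : Real.log i ≤ C * a n₁ i := by
    have h := hC i hi
    have ha0 : (0:ℝ) < a n₀ i := lt_of_lt_of_le one_pos (ginf_one_le hA hn₀ hipos)
    have : Real.log i ≤ C * a n₀ i := by
      calc Real.log i = Real.log i * (a n₀ i)⁻¹ * a n₀ i := by field_simp
        _ ≤ C * a n₀ i := mul_le_mul_of_nonneg_right h ha0.le
    exact this.trans (mul_le_mul_of_nonneg_left
      (ginf_mono_n hA hn₀ hipos (le_max_right _ _)) hC0)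
  have hsq : a n₁ i * (1 + Real.log i) ≤ (1 + C) * (a n₁ i) ^ 2 := by
    have h1 : a n₁ i * (1 + Real.log i) ≤ a n₁ i * (1 + C * a n₁ i) :=
      mul_le_mul_of_nonneg_left (by linarith) hani.le
    have h2 : 1 ≤ a n₁ i := ginf_one_le hA hn₁ hipos
    nlinarith
  have hsq2 : (a n₁ i) ^ 2 ≤ M * a m i := hMi i hipos
  have key : ∑ j ∈ Finset.Icc 1 (i - 1), a n j / (j : ℝ) ≤ (1 + C) * M * a m i := by
    calc ∑ j ∈ Finset.Icc 1 (i - 1), a n j / (j : ℝ)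
        ≤ a n₁ i * ∑ j ∈ Finset.Icc 1 (i - 1), (j : ℝ)⁻¹ := hsum1
      _ ≤ a n₁ i * (1 + Real.log i) := mul_le_mul_of_nonneg_left hharm hani.le
      _ ≤ (1 + C) * (a n₁ i) ^ 2 := hsq
      _ ≤ (1 + C) * (M * a m i) := mul_le_mul_of_nonneg_left hsq2 (by linarith)
      _ = (1 + C) * M * a m i := by ring
  calc (a m i)⁻¹ * ∑ j ∈ Finset.Icc 1 (i - 1), a n j / (j : ℝ)
      ≤ (a m i)⁻¹ * ((1 + C) * M * a m i) :=
        mul_le_mul_of_nonneg_left key (by positivity)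
    _ = (1 + C) * M := by field_simp
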